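/- arXiv:2202.00473 — 5 statements merged into one kernel-verified Lean document; each statement's English description precedes it below -/
import Mathlib

section
/- Full binary trees of height at most k are in bijection with win-loss sequences of k-passthrough unicard games; consequently the number of such win-loss sequences is A_k, where A_1 = 1 and A_{k+1} = 1 + A_k^2. -/
/-- A full binary tree: every node has zero or two children. -/
inductive FullBinTree : Type
  | leaf : FullBinTree
  | node : FullBinTree → FullBinTree → FullBinTree

/-- Height of a full binary tree; a single leaf has height 1. -/
def FullBinTree.height : FullBinTree → ℕ
  | .leaf => 1
  | .node l r => 1 + max l.height r.height

/-- Merge the level lists of two trees: level `i` of the merge is the concatenation of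
the levels `i` of the two trees. -/
def combineLevels : List (List Bool) → List (List Bool) → List (List Bool)
  | [], ys => ys
  | xs, [] => xs
  | x :: xs, y :: ys => (x ++ y) :: combineLevels xs ys

/-- The levels of a full binary tree, each level read left to right, where internal
nodes are labeled `true` (W) and leaves are labeled `false` (L). -/
def FullBinTree.levels : FullBinTree → List (List Bool)
  | .leaf => [[false]]
  | .node l r => [true] :: combineLevels l.levels r.levels

/-- The win-loss sequence of a full binary tree: its labels read level by level,
left to right within each level (`true` = W on internal nodes, `false` = L on leaves). -/
def FullBinTree.levelOrder (t : FullBinTree) : List Bool := t.levels.flatten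

/-- The sequence `A` with `A 1 = 1` and `A (k+1) = 1 + (A k)^2`. -/
def A : ℕ → ℕ
  | 0 => 0
  | k + 1 => 1 + (A k) ^ 2

/-!
The widths of the levels of a full binary tree are forced: the root level has width 1 and
each further level has twice as many nodes as there are `W`s on the level above. Hence the
flat level-order sequence can be cut back into its levels, and each level of `node l r`
(below the root) can be cut into the parts coming from `l` and from `r`, since the widths
of those parts are forced in the same way. Counting is the recursion: a tree of height at
most `k + 1` is a leaf or a pair of trees of height at most `k`.
-/

inductive IsLayered {α : Type*} (next : List α → ℕ) : ℕ → List (List α) → Prop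
  | nil : IsLayered next 0 []
  | cons {n : ℕ} {l : List α} {rest : List (List α)} :
      0 < l.length → l.length = n → IsLayered next (next l) rest → IsLayered next n (l :: rest)

namespace IsLayered

section

variable {α : Type*} {next : List α → ℕ}

theorem eq_nil_of_zero {L : List (List α)} (h : IsLayered next 0 L) : L = [] := by
  cases h with
  | nil => rfl
  | cons hpos hlen _ => omega

theorem flatten_injective {n : ℕ} {L₁ L₂ : List (List α)}
    (h₁ : IsLayered next n L₁) (h₂ : IsLayered next n L₂) (h : L₁.flatten = L₂.flatten) :
    L₁ = L₂ := by
  induction h₁ generalizing L₂ with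
  | nil => exact h₂.eq_nil_of_zero.symm
  | cons hpos hlen _ ih =>
    cases h₂ with
    | nil => omega
    | cons _ hlen₂ htail₂ =>
      obtain ⟨rfl, hrest⟩ := List.append_inj h (by omega)
      rw [ih htail₂ hrest]

end

section

variable {next : List Bool → ℕ}

theorem combineLevels (hnext : ∀ x y, next (x ++ y) = next x + next y)
    {n m : ℕ} {L₁ L₂ : List (List Bool)}
    (h₁ : IsLayered next n L₁) (h₂ : IsLayered next m L₂) :
    IsLayered next (n + m) (combineLevels L₁ L₂) := by
  induction h₁ generalizing m L₂ with
  | nil => simpa [_root_.combineLevels] using h₂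
  | cons hpos hlen htail ih =>
    cases h₂ with
    | nil => simpa [_root_.combineLevels] using IsLayered.cons hpos (by omega) htail
    | cons hpos₂ hlen₂ htail₂ =>
      refine .cons (by simp; omega) (by simp; omega) ?_
      simpa [hnext] using ih htail₂

theorem combineLevels_injective {n m : ℕ} {A₁ A₂ B₁ B₂ : List (List Bool)}
    (hA₁ : IsLayered next n A₁) (hA₂ : IsLayered next n A₂)
    (hB₁ : IsLayered next m B₁) (hB₂ : IsLayered next m B₂)
    (h : _root_.combineLevels A₁ B₁ = _root_.combineLevels A₂ B₂) : A₁ = A₂ ∧ B₁ = B₂ := by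
  induction hA₁ generalizing m A₂ B₁ B₂ with
  | nil =>
    obtain rfl := hA₂.eq_nil_of_zero
    exact ⟨rfl, by simpa [_root_.combineLevels] using h⟩
  | cons hpos hlen htail ih =>
    cases hA₂ with
    | nil => omega
    | cons _ hlen₂ htail₂ =>
      cases hB₁ with
      | nil =>
        obtain rfl := hB₂.eq_nil_of_zero
        exact ⟨by simpa [_root_.combineLevels] using h, rfl⟩
      | cons _ hblen hbtail =>
        cases hB₂ with
        | nil => omega
        | cons _ hblen₂ hbtail₂ =>
          simp only [_root_.combineLevels, List.cons.injEq] at h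
          obtain ⟨rfl, rfl⟩ := List.append_inj h.1 (by omega)
          obtain ⟨rfl, rfl⟩ := ih htail₂ hbtail hbtail₂ h.2
          exact ⟨rfl, rfl⟩

end

end IsLayered

namespace FullBinTree

def childCount (l : List Bool) : ℕ := 2 * l.count true

theorem childCount_append (x y : List Bool) :
    childCount (x ++ y) = childCount x + childCount y := by
  simp [childCount, List.count_append, Nat.mul_add]

theorem isLayered_levels (t : FullBinTree) : IsLayered childCount 1 t.levels := by
  induction t with
  | leaf => exact .cons (by simp) rfl (by simpa [childCount] using IsLayered.nil)
  | node l r ihl ihr =>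
    exact .cons (by simp) rfl (by simpa [childCount] using ihl.combineLevels childCount_append ihr)

theorem levels_injective : Function.Injective levels := by
  intro s
  induction s with
  | leaf => intro t h; cases t <;> simp_all [levels]
  | node l r ihl ihr =>
    intro t h
    cases t with
    | leaf => simp [levels] at h
    | node l' r' =>
      simp only [levels, List.cons.injEq, true_and] at h
      obtain ⟨hl, hr⟩ := (isLayered_levels l).combineLevels_injective (isLayered_levels l')
        (isLayered_levels r) (isLayered_levels r') h
      rw [ihl hl, ihr hr]

theorem levelOrder_injective : Function.Injective levelOrder := fun s t h =>
  levels_injective ((isLayered_levels s).flatten_injective (isLayered_levels t) h)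

theorem height_node_le_succ {l r : FullBinTree} {k : ℕ} :
    (node l r).height ≤ k + 1 ↔ l.height ≤ k ∧ r.height ≤ k := by
  simp only [height]
  omega

instance isEmpty_height_le_zero : IsEmpty {t : FullBinTree // t.height ≤ 0} :=
  ⟨fun ⟨t, ht⟩ => by cases t <;> simp [height] at ht⟩

def heightLeSuccEquiv (k : ℕ) :
    {t : FullBinTree // t.height ≤ k + 1} ≃
      Unit ⊕ {t : FullBinTree // t.height ≤ k} × {t : FullBinTree // t.height ≤ k} where
  toFun
    | ⟨leaf, _⟩ => .inl ()
    | ⟨node l r, h⟩ => .inr (⟨l, (height_node_le_succ.mp h).1⟩, ⟨r, (height_node_le_succ.mp h).2⟩)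
  invFun
    | .inl _ => ⟨leaf, by simp [height]⟩
    | .inr (l, r) => ⟨node l r, height_node_le_succ.mpr ⟨l.2, r.2⟩⟩
  left_inv
    | ⟨leaf, _⟩ => rfl
    | ⟨node _ _, _⟩ => rfl
  right_inv
    | .inl _ => rfl
    | .inr _ => rfl

theorem finite_height_le (k : ℕ) : Finite {t : FullBinTree // t.height ≤ k} := by
  induction k with
  | zero => infer_instance
  | succ k ih => exact Finite.of_equiv _ (heightLeSuccEquiv k).symm

theorem card_height_le (k : ℕ) : Nat.card {t : FullBinTree // t.height ≤ k} = A k := by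
  induction k with
  | zero => exact Nat.card_of_isEmpty
  | succ k ih =>
    have := finite_height_le k
    rw [Nat.card_congr (heightLeSuccEquiv k), Nat.card_sum, Nat.card_prod, ih, A]
    simp [sq, add_comm]

end FullBinTree

theorem win_loss_sequences_biject_full_binary_trees_general (k : ℕ) :
    Set.InjOn FullBinTree.levelOrder {t : FullBinTree | t.height ≤ k} ∧
      Set.ncard {t : FullBinTree | t.height ≤ k} = A k :=
  ⟨FullBinTree.levelOrder_injective.injOn, by
    rw [← Nat.card_coe_set_eq]
    exact FullBinTree.card_height_le k⟩

/-- Full binary trees of height at most `k` are in bijection with win-loss sequences of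
`k`-passthrough unicard games: the level-order label sequence map is injective on trees
of height at most `k`, and the number of such trees (hence of such win-loss sequences)
is `A k`, where `A 1 = 1`, `A (k+1) = 1 + (A k)^2`. -/
theorem win_loss_sequences_biject_full_binary_trees (k : ℕ) (hk : 1 ≤ k) :
    Set.InjOn FullBinTree.levelOrder {t : FullBinTree | t.height ≤ k} ∧
      Set.ncard {t : FullBinTree | t.height ≤ k} = A k :=
  win_loss_sequences_biject_full_binary_trees_general k
end

section
/- For nonnegative integers m ≥ 1 and k: binomial(m+2k-1, k) - binomial(m+2k-1, k-1) = the sum over all compositions (x_1,...,x_m) of k into m nonnegative parts of the product Catalan(x_1) * Catalan(x_2) * ... * Catalan(x_m). -/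
/-!
The Catalan generating function `C` satisfies `C = 1 + X * C ^ 2`, hence
`C ^ (m + 1) = C ^ m + X * C ^ (m + 2)`. Comparing coefficients of `X ^ (k + 1)`, the
coefficients of `C ^ m` obey the same Pascal-type recurrence as the Catalan triangle entries
(which follows from Pascal's rule for binomials), with the same boundary values at `k = 0` and
at `m = 0`. Finally, the coefficient of `X ^ k` in `C ^ m` is the sum over compositions of `k`
into `m` parts of the products of Catalan numbers.
-/

open Finset

namespace PowerSeries

theorem coeff_mk_pow {R : Type*} [CommSemiring R] (f : ℕ → R) (m k : ℕ) :
    coeff k (mk f ^ m) = ∑ x ∈ Nat.antidiagonalTuple m k, ∏ i, f (x i) := by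
  rw [← Fin.prod_const, coeff_prod, finsuppAntidiag, sum_map,
    ← piAntidiag_univ_fin_eq_antidiagonalTuple, ← sum_attach (piAntidiag univ k)]
  simp only [coeff_mk]
  rfl

theorem catalanSeries_pow_succ (m : ℕ) :
    catalanSeries ^ (m + 1) = catalanSeries ^ m + X * catalanSeries ^ (m + 2) := by
  calc catalanSeries ^ (m + 1) = catalanSeries ^ m * (catalanSeries ^ 2 * X + 1) := by
        rw [catalanSeries_sq_mul_X_add_one, pow_succ]
    _ = _ := by ring

theorem coeff_zero_catalanSeries_pow (m : ℕ) : coeff 0 (catalanSeries ^ m) = 1 := by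
  rw [coeff_zero_eq_constantCoeff_apply, map_pow, catalanSeries_constantCoeff, one_pow]

theorem coeff_succ_catalanSeries_pow_succ (m k : ℕ) :
    coeff (k + 1) (catalanSeries ^ (m + 1)) =
      coeff (k + 1) (catalanSeries ^ m) + coeff k (catalanSeries ^ (m + 2)) := by
  rw [catalanSeries_pow_succ, map_add, coeff_succ_X_mul]

end PowerSeries

open PowerSeries

/-- The entry `C(m + k - 1, k)` of Catalan's triangle. -/
def catalanTriangle (m k : ℕ) : ℤ :=
  ((m + 2 * k - 1).choose k : ℤ) -
    (if k = 0 then 0 else ((m + 2 * k - 1).choose (k - 1) : ℤ))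

theorem catalanTriangle_zero_right (m : ℕ) : catalanTriangle m 0 = 1 := by
  simp [catalanTriangle]

theorem catalanTriangle_succ_right (m k : ℕ) :
    catalanTriangle m (k + 1) =
      ((m + 2 * k + 1).choose (k + 1) : ℤ) - (m + 2 * k + 1).choose k := by
  simp only [catalanTriangle, if_neg k.succ_ne_zero, Nat.add_sub_cancel]
  congr 3

theorem catalanTriangle_zero_succ (k : ℕ) : catalanTriangle 0 (k + 1) = 0 := by
  rw [catalanTriangle_succ_right, zero_add, Nat.choose_symm_half, sub_self]

theorem catalanTriangle_succ_succ (m k : ℕ) :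
    catalanTriangle (m + 1) (k + 1) = catalanTriangle m (k + 1) + catalanTriangle (m + 2) k := by
  rcases k with _ | k
  · simp [catalanTriangle_succ_right, catalanTriangle_zero_right]
  · simp only [catalanTriangle_succ_right]
    rw [show m + 1 + 2 * (k + 1) + 1 = m + 2 * k + 3 + 1 by ring,
      show m + 2 * (k + 1) + 1 = m + 2 * k + 3 by ring,
      show m + 2 + 2 * k + 1 = m + 2 * k + 3 by ring,
      Nat.choose_succ_succ (m + 2 * k + 3) (k + 1), Nat.choose_succ_succ (m + 2 * k + 3) k]
    push_cast
    ring

theorem catalanTriangle_eq_coeff_catalanSeries_pow (m k : ℕ) :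
    catalanTriangle m k = coeff k (catalanSeries ^ m) := by
  induction k generalizing m with
  | zero => rw [catalanTriangle_zero_right, coeff_zero_catalanSeries_pow, Nat.cast_one]
  | succ k ihk =>
    induction m with
    | zero => simp [catalanTriangle_zero_succ]
    | succ m ihm =>
      rw [catalanTriangle_succ_succ, coeff_succ_catalanSeries_pow_succ, ihm, ihk, Nat.cast_add]

theorem catalan_triangle_eq_sum_prod_catalan_general (m k : ℕ) :
    ((m + 2 * k - 1).choose k : ℤ) -
        (if k = 0 then 0 else ((m + 2 * k - 1).choose (k - 1) : ℤ)) =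
      ∑ x ∈ Finset.Nat.antidiagonalTuple m k, ∏ i, (catalan (x i) : ℤ) := by
  rw [← catalanTriangle, catalanTriangle_eq_coeff_catalanSeries_pow, catalanSeries, coeff_mk_pow]
  push_cast
  rfl

/-- `binom(m+2k-1,k) - binom(m+2k-1,k-1)` (the Catalan triangle entry `C(m+k-1,k)`,
with `binom(·,-1) = 0`) equals the sum over all `m`-tuples of nonnegative integers
summing to `k` of the product of the corresponding Catalan numbers. -/
theorem catalan_triangle_eq_sum_prod_catalan (m k : ℕ) (hm : 1 ≤ m) :
    ((m + 2 * k - 1).choose k : ℤ) -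
        (if k = 0 then 0 else ((m + 2 * k - 1).choose (k - 1) : ℤ)) =
      ∑ x ∈ Finset.Nat.antidiagonalTuple m k, ∏ i, (catalan (x i) : ℤ) :=
  catalan_triangle_eq_sum_prod_catalan_general m k
end

section
/- Let T be a rooted tree with n vertices, regarded as a poset where the root is the maximum and u ≤ v iff v lies on the path from the root to u... (i.e., ancestors are larger). Then the number of linear extensions of T (bijective order-preserving labelings by {1,...,n}) equals n! divided by the product over all vertices v of h(v), where h(v) is the number of vertices in the subtree rooted at v. -/
/-!
The induction runs over forests (every `Ici v` a chain), since deleting the root of a tree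
leaves a forest. Give the top label to a vertex `m`: the labelling is a linear extension exactly
when `m` is a root and the rest of it is a linear extension of the forest with `m` deleted.
Deleting a root leaves every other subtree untouched and divides the hook product by `h(m)`, so by
induction the count with `m` on top is `(n-1)! * h(m) / ∏ h`. Summing over the roots, whose
subtrees partition the forest, gives `(n-1)! * n / ∏ h`.
-/

open Function Set

theorem Set.ncard_eq_sum_ncard_sep_of_existsUnique {ι α : Type*} [Fintype ι] {s : Set α}
    (hs : s.Finite) (r : ι → α → Prop) (h : ∀ x ∈ s, ∃! i, r i x) :
    s.ncard = ∑ i, {x ∈ s | r i x}.ncard := by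
  have hunion : ⋃ i, {x ∈ s | r i x} = s := by
    ext x
    simp only [mem_iUnion, mem_sep_iff, exists_and_left, and_iff_left_iff_imp]
    exact fun hx => (h x hx).exists
  have hdisj : Pairwise (Disjoint on fun i => {x ∈ s | r i x}) := fun i j hij =>
    Set.disjoint_left.2 fun x ⟨hx, hi⟩ ⟨_, hj⟩ => hij ((h x hx).unique hi hj)
  rw [← finsum_eq_sum_of_fintype,
    ← ncard_iUnion_of_finite (fun i => hs.subset (sep_subset _ _)) hdisj, hunion]

def linearExtensions (V : Type*) [Preorder V] (n : ℕ) : Set (V → Fin n) :=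
  {f | Bijective f ∧ Monotone f}

section TopLabel

variable {V : Type*} {k : ℕ} {m : V}

def extendTop [DecidableEq V] (m : V) (g : {v // v ≠ m} → Fin k) : V → Fin (k + 1) :=
  fun v => if h : v = m then Fin.last k else (g ⟨v, h⟩).castSucc

def restrictTop {f : V → Fin (k + 1)} (hf : Injective f) (hfm : f m = Fin.last k) :
    {v // v ≠ m} → Fin k :=
  fun v => (f v).castPred fun h => v.2 (hf (h.trans hfm.symm))

section DecidableEq

variable [DecidableEq V]

@[simp]
theorem extendTop_self (g : {v // v ≠ m} → Fin k) : extendTop m g m = Fin.last k :=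
  dif_pos rfl

theorem extendTop_of_ne (g : {v // v ≠ m} → Fin k) {v : V} (hv : v ≠ m) :
    extendTop m g v = (g ⟨v, hv⟩).castSucc :=
  dif_neg hv

theorem extendTop_injective (m : V) : Injective (extendTop (k := k) m) := fun g₁ g₂ h =>
  funext fun v => by simpa [extendTop_of_ne _ v.2] using congrFun h v

theorem extendTop_restrictTop {f : V → Fin (k + 1)} (hf : Injective f) (hfm : f m = Fin.last k) :
    extendTop m (restrictTop hf hfm) = f := by
  funext v
  by_cases hv : v = m
  · rw [hv, extendTop_self, hfm]
  · rw [extendTop_of_ne _ hv, restrictTop, Fin.castSucc_castPred]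

theorem bijective_extendTop {g : {v // v ≠ m} → Fin k} (hg : Bijective g) :
    Bijective (extendTop m g) := by
  refine ⟨fun a b hab => ?_, fun i => ?_⟩
  · by_cases ha : a = m <;> by_cases hb : b = m
    · exact ha.trans hb.symm
    · simp [ha, extendTop_of_ne g hb, eq_comm (a := Fin.last k)] at hab
    · simp [hb, extendTop_of_ne g ha] at hab
    · rw [extendTop_of_ne g ha, extendTop_of_ne g hb] at hab
      exact congrArg Subtype.val (hg.1 (Fin.castSucc_injective k hab))
  · induction i using Fin.lastCases with
    | last => exact ⟨m, extendTop_self g⟩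
    | cast i =>
      obtain ⟨w, rfl⟩ := hg.2 i
      exact ⟨w, extendTop_of_ne g w.2⟩

theorem monotone_extendTop [PartialOrder V] (hm : IsMax m) {g : {v // v ≠ m} → Fin k}
    (hg : Monotone g) : Monotone (extendTop m g) := by
  intro u v huv
  by_cases hv : v = m
  · simp [hv, Fin.le_last]
  · have hu : u ≠ m := fun hu => hv (hm.eq_of_le (hu ▸ huv)).symm
    rw [extendTop_of_ne g hu, extendTop_of_ne g hv, Fin.castSucc_le_castSucc_iff]
    exact hg (show (⟨u, hu⟩ : {v // v ≠ m}) ≤ ⟨v, hv⟩ from huv)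

end DecidableEq

variable [PartialOrder V]

theorem isMax_of_mem_linearExtensions {f : V → Fin (k + 1)} (hf : f ∈ linearExtensions V (k + 1))
    (hfm : f m = Fin.last k) : IsMax m := fun _ hmw =>
  (hf.1.1 ((le_antisymm (Fin.le_last _) (hfm ▸ hf.2 hmw)).trans hfm.symm)).le

theorem restrictTop_mem_linearExtensions {f : V → Fin (k + 1)}
    (hf : f ∈ linearExtensions V (k + 1)) (hfm : f m = Fin.last k) :
    restrictTop hf.1.1 hfm ∈ linearExtensions {v // v ≠ m} k := by
  refine ⟨⟨fun a b hab => Subtype.val_injective (hf.1.1 ?_), fun i => ?_⟩, fun a b hab => ?_⟩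
  · simpa [restrictTop] using hab
  · obtain ⟨v, hv⟩ := hf.1.2 i.castSucc
    have hvm : v ≠ m := by rintro rfl; exact Fin.castSucc_ne_last i (hv.symm.trans hfm)
    exact ⟨⟨v, hvm⟩, by simp [restrictTop, hv]⟩
  · exact Fin.castPred_le_castPred_iff.2 (hf.2 hab)

theorem setOf_mem_linearExtensions_apply_eq_last [DecidableEq V] (hm : IsMax m) :
    {f ∈ linearExtensions V (k + 1) | f m = Fin.last k} =
      extendTop m '' linearExtensions {v // v ≠ m} k := by
  ext f
  constructor
  · rintro ⟨hf, hfm⟩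
    exact ⟨_, restrictTop_mem_linearExtensions hf hfm, extendTop_restrictTop hf.1.1 hfm⟩
  · rintro ⟨g, hg, rfl⟩
    exact ⟨⟨bijective_extendTop hg.1, monotone_extendTop hm hg.2⟩, extendTop_self g⟩

theorem ncard_setOf_mem_linearExtensions_apply_eq_last [DecidableEq V] (hm : IsMax m) :
    {f ∈ linearExtensions V (k + 1) | f m = Fin.last k}.ncard =
      (linearExtensions {v // v ≠ m} k).ncard := by
  rw [setOf_mem_linearExtensions_apply_eq_last hm,
    ncard_image_of_injective _ (extendTop_injective m)]

theorem ncard_linearExtensions_eq_sum_ncard_apply_eq [Fintype V] {n : ℕ} (b : Fin n) :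
    (linearExtensions V n).ncard = ∑ m, {f ∈ linearExtensions V n | f m = b}.ncard :=
  ncard_eq_sum_ncard_sep_of_existsUnique (toFinite _) _ fun _ hf => hf.1.existsUnique b

theorem ncard_Iic_subtype_ne (hm : IsMax m) (v : {v // v ≠ m}) :
    (Iic v).ncard = (Iic (v : V)).ncard := by
  have : Iic (v : V) = Subtype.val '' Iic v := by
    ext u
    refine ⟨fun hu => ⟨⟨u, fun h => v.2 (hm.eq_of_le (h ▸ hu)).symm⟩, hu, rfl⟩, ?_⟩
    rintro ⟨u, hu, rfl⟩
    exact hu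
  rw [this, ncard_image_of_injective _ Subtype.val_injective]

theorem prod_ncard_Iic_eq_of_isMax [Fintype V] [DecidableEq V] (hm : IsMax m) :
    ∏ v : V, (Iic v).ncard = (Iic m).ncard * ∏ v : {v // v ≠ m}, (Iic v).ncard := by
  rw [Fintype.prod_eq_mul_prod_subtype_ne (fun v : V => (Iic v).ncard) m]
  simp only [ncard_Iic_subtype_ne hm]

end TopLabel

section Forest

variable {V : Type*} [PartialOrder V] (hchain : ∀ v : V, IsChain (· ≤ ·) (Ici v))
include hchain

theorem isChain_Ici_subtype (p : V → Prop) (v : Subtype p) : IsChain (· ≤ ·) (Ici v) :=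
  (hchain v).preimage_embedding (OrderEmbedding.subtype p)

theorem existsUnique_isMax_le [Finite V] (v : V) : ∃! m, IsMax m ∧ v ≤ m := by
  obtain ⟨m, hvm, hm⟩ := Finite.exists_le_maximal (p := fun _ : V => True) trivial
  refine ⟨m, ⟨maximal_true.1 hm, hvm⟩, fun m' ⟨hm', hvm'⟩ => ?_⟩
  rcases (hchain v).total hvm' hvm with h | h
  · exact hm'.eq_of_le h
  · exact (maximal_true.1 hm).eq_of_ge h

theorem sum_ncard_setOf_isMax_le [Fintype V] :
    ∑ m : V, {v | IsMax m ∧ v ≤ m}.ncard = Fintype.card V := by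
  rw [← Nat.card_eq_fintype_card, ← ncard_univ, ncard_eq_sum_ncard_sep_of_existsUnique
    (toFinite _) (fun m v => IsMax m ∧ v ≤ m) fun v _ => existsUnique_isMax_le hchain v]
  simp only [mem_univ, true_and]

end Forest

theorem ncard_linearExtensions_mul_prod_ncard_Iic {V : Type*} [Fintype V] [PartialOrder V]
    {n : ℕ} (hcard : Fintype.card V = n) (hchain : ∀ v : V, IsChain (· ≤ ·) (Ici v)) :
    (linearExtensions V n).ncard * ∏ v : V, (Iic v).ncard = n.factorial := by
  classical
  induction n generalizing V with
  | zero =>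
    have : IsEmpty V := Fintype.card_eq_zero_iff.1 hcard
    simp [linearExtensions, Subsingleton.monotone]
  | succ k ih =>
    have hstep : ∀ m : V, {f ∈ linearExtensions V (k + 1) | f m = Fin.last k}.ncard *
        ∏ v : V, (Iic v).ncard = k.factorial * {v | IsMax m ∧ v ≤ m}.ncard := by
      intro m
      by_cases hm : IsMax m
      · have hcard' : Fintype.card {v // v ≠ m} = k := by
          simp [Fintype.card_subtype_compl, hcard]
        rw [ncard_setOf_mem_linearExtensions_apply_eq_last hm, prod_ncard_Iic_eq_of_isMax hm,
          mul_left_comm, ih hcard' (isChain_Ici_subtype hchain _), mul_comm]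
        simp only [hm, true_and, Iic]
      · have hempty : {f ∈ linearExtensions V (k + 1) | f m = Fin.last k} = ∅ :=
          eq_empty_of_forall_notMem fun f ⟨hf, hfm⟩ => hm (isMax_of_mem_linearExtensions hf hfm)
        simp [hm, hempty]
    calc (linearExtensions V (k + 1)).ncard * ∏ v : V, (Iic v).ncard
        = ∑ m : V, k.factorial * {v | IsMax m ∧ v ≤ m}.ncard := by
          rw [ncard_linearExtensions_eq_sum_ncard_apply_eq (Fin.last k), Finset.sum_mul]
          exact Finset.sum_congr rfl fun m _ => hstep m
      _ = (k + 1).factorial := by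
          rw [← Finset.mul_sum, sum_ncard_setOf_isMax_le hchain, hcard, Nat.factorial_succ,
            mul_comm]

theorem tree_poset_linear_extensions_general (n : ℕ) (V : Type) [Fintype V] [PartialOrder V]
    (hcard : Fintype.card V = n)
    (hchain : ∀ v : V, IsChain (· ≤ ·) {u : V | v ≤ u}) :
    Set.ncard {f : V → Fin n | Function.Bijective f ∧ ∀ u v : V, u ≤ v → f u ≤ f v} *
        ∏ v : V, Set.ncard {u : V | u ≤ v} = n.factorial :=
  ncard_linearExtensions_mul_prod_ncard_Iic hcard hchain

/-- Ruskey's hook-length formula for rooted trees. Let `V` be a tree poset on `n`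
vertices: every principal up-set `{u | v ≤ u}` is a chain (ancestors of a vertex form
a chain) and there is a maximum element (the root). With `h v` the number of elements
`≤ v` (the subtree size), the number of linear extensions (bijective order-preserving
labelings by `{1,…,n}`, modeled as `Fin n`) times `∏ v, h v` equals `n!`. -/
theorem tree_poset_linear_extensions (n : ℕ) (V : Type) [Fintype V] [PartialOrder V]
    (hcard : Fintype.card V = n)
    (hchain : ∀ v : V, IsChain (· ≤ ·) {u : V | v ≤ u})
    (hroot : ∃ m : V, ∀ v, v ≤ m) :
    Set.ncard {f : V → Fin n | Function.Bijective f ∧ ∀ u v : V, u ≤ v → f u ≤ f v} *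
        ∏ v : V, Set.ncard {u : V | u ≤ v} = n.factorial :=
  tree_poset_linear_extensions_general n V hcard hchain
end

section
/- Let T be a rooted tree poset on k vertices v_1, ..., v_k (root maximal, subtree size of vertex v denoted h(v)). Consider the poset P on 2k elements obtained by taking T together with k additional elements y_1,...,y_k, where y_i is required to be greater than the i-th vertex v_i of T and these are the only added relations. Then the number of linear extensions of P, i.e. the number of assignments of the values 1,...,2k to the 2k elements of P respecting the order relations, equals (2k)! / (2^k · ∏_{i=1}^k h(v_i)). -/
open Function Sum Finset
open scoped Classical
set_option linter.unusedSectionVars false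

namespace WLP
variable {T : Type} [Fintype T] [PartialOrder T]

def MonoSet (T : Type) [Fintype T] [PartialOrder T] (n : ℕ) : Set (T → Fin n) :=
  {g | Function.Bijective g ∧ ∀ a b : T, a ≤ b → g a ≤ g b}

lemma exists_max_above (u : T) : ∃ r : T, IsMax r ∧ u ≤ r := by
  obtain ⟨m, hm, hmax⟩ := Finset.exists_maximal (s := univ.filter (fun x => u ≤ x))
    ⟨u, by simp⟩
  simp only [mem_filter, mem_univ, true_and] at hm
  refine ⟨m, ?_, hm⟩
  intro b hmb
  by_contra hb
  exact hb (hmax (by simp [hm.trans hmb]) hmb)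

lemma max_above_unique (hchain : ∀ v : T, IsChain (· ≤ ·) {u : T | v ≤ u})
    {u r r' : T} (hr : IsMax r) (hr' : IsMax r') (h1 : u ≤ r) (h2 : u ≤ r') : r = r' := by
  by_contra hne
  rcases hchain u h1 h2 hne with h | h
  · exact hne (le_antisymm h (hr h))
  · exact hne (le_antisymm (hr' h) h)

lemma sum_maximal_downset (hchain : ∀ v : T, IsChain (· ≤ ·) {u : T | v ≤ u}) :
    ∑ r ∈ univ.filter (fun r : T => IsMax r), Nat.card {u : T | u ≤ r} = Fintype.card T := by
  have hcover : (Finset.univ : Finset T) =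
      (univ.filter (fun r : T => IsMax r)).biUnion (fun r => univ.filter (fun u => u ≤ r)) := by
    ext u
    simp only [mem_univ, true_iff, mem_biUnion, mem_filter, true_and]
    obtain ⟨r, hr, hur⟩ := exists_max_above u
    exact ⟨r, hr, hur⟩
  have hdisj : ∀ r ∈ univ.filter (fun r : T => IsMax r), ∀ r' ∈ univ.filter (fun r : T => IsMax r),
      r ≠ r' → Disjoint (univ.filter (fun u => u ≤ r)) (univ.filter (fun u => u ≤ r')) := by
    intro r hr r' hr' hne
    simp only [mem_filter, mem_univ, true_and] at hr hr'
    refine Finset.disjoint_left.mpr ?_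
    intro u hu hu'
    simp only [mem_filter, mem_univ, true_and] at hu hu'
    exact hne (max_above_unique hchain hr hr' hu hu')
  have := Finset.card_biUnion hdisj
  rw [← hcover] at this
  rw [Finset.card_univ] at this
  rw [this]
  refine Finset.sum_congr rfl fun r _ => ?_
  rw [Nat.card_eq_fintype_card, Fintype.card_subtype]
  congr 1


section Fiber
variable {n : ℕ}

noncomputable def topOf (g : ↥(MonoSet T (n+1))) : T :=
  (Equiv.ofBijective g.1 g.2.1).symm (Fin.last n)

lemma apply_topOf (g : ↥(MonoSet T (n+1))) : g.1 (topOf g) = Fin.last n :=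
  (Equiv.ofBijective g.1 g.2.1).apply_symm_apply (Fin.last n)

lemma isMax_topOf (g : ↥(MonoSet T (n+1))) : IsMax (topOf g) := by
  intro b hb
  have h1 : g.1 (topOf g) ≤ g.1 b := g.2.2 _ _ hb
  have h2 : g.1 b ≤ Fin.last n := Fin.le_last _
  rw [apply_topOf] at h1
  have : g.1 b = g.1 (topOf g) := by rw [apply_topOf]; exact le_antisymm h2 h1
  rw [g.2.1.1 this]

variable (r : T)

lemma card_ne (hcard : Fintype.card T = n + 1) :
    Fintype.card {u : T // u ≠ r} = n := by
  have h1 : Fintype.card {u : T // ¬ (u = r)} = Fintype.card T - Fintype.card {u : T // u = r} :=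
    Fintype.card_subtype_compl _
  have h2 : Fintype.card {u : T // u = r} = 1 := Fintype.card_subtype_eq r
  calc Fintype.card {u : T // u ≠ r} = Fintype.card {u : T // ¬ (u = r)} := rfl
    _ = Fintype.card T - 1 := by rw [h1, h2]
    _ = n := by rw [hcard]; omega

lemma gr_last (g : {g : ↥(MonoSet T (n+1)) // topOf g = r}) :
    g.1.1 r = Fin.last n := by
  have := apply_topOf g.1
  rw [g.2] at this
  exact this

lemma gu_ne_last (g : {g : ↥(MonoSet T (n+1)) // topOf g = r}) (u : {u : T // u ≠ r}) :
    g.1.1 u.1 ≠ Fin.last n := fun h => u.2 (g.1.2.1.1 (h.trans (gr_last r g).symm))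

noncomputable def downFun (g : {g : ↥(MonoSet T (n+1)) // topOf g = r}) :
    {u : T // u ≠ r} → Fin n :=
  fun u => (g.1.1 u.1).castPred (gu_ne_last r g u)

noncomputable def upFun (g' : {u : T // u ≠ r} → Fin n) : T → Fin (n+1) :=
  fun u => if h : u = r then Fin.last n else (g' ⟨u, h⟩).castSucc

lemma upFun_r (g' : {u : T // u ≠ r} → Fin n) : upFun r g' r = Fin.last n := dif_pos rfl

lemma upFun_ne (g' : {u : T // u ≠ r} → Fin n) {u : T} (h : u ≠ r) :
    upFun r g' u = (g' ⟨u, h⟩).castSucc := dif_neg h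

lemma downFun_mem (hcard : Fintype.card T = n + 1) (g : {g : ↥(MonoSet T (n+1)) // topOf g = r}) :
    downFun r g ∈ MonoSet {u : T // u ≠ r} n := by
  have hinj : Function.Injective (downFun r g) := by
    intro a b hab
    have hv : (g.1.1 a.1).1 = (g.1.1 b.1).1 := by
      simpa [downFun, Fin.coe_castPred] using congrArg Fin.val hab
    exact Subtype.ext (g.1.2.1.1 (Fin.val_injective hv))
  refine ⟨(Fintype.bijective_iff_injective_and_card _).2 ⟨hinj, ?_⟩, ?_⟩
  · rw [card_ne r hcard, Fintype.card_fin]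
  · intro a b hab
    have : g.1.1 a.1 ≤ g.1.1 b.1 := g.1.2.2 _ _ hab
    exact Fin.castPred_le_castPred_iff.mpr this

lemma upFun_mem (hcard : Fintype.card T = n + 1) (hr : IsMax r) (g' : ↥(MonoSet {u : T // u ≠ r} n)) :
    upFun r g'.1 ∈ MonoSet T (n+1) := by
  have hinj : Function.Injective (upFun r g'.1) := by
    intro a b hab
    by_cases ha : a = r <;> by_cases hb : b = r
    · rw [ha, hb]
    · exfalso
      rw [ha, upFun_r, upFun_ne r g'.1 hb] at hab
      exact absurd hab.symm (Fin.ne_of_lt (Fin.castSucc_lt_last _))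
    · exfalso
      rw [hb, upFun_r, upFun_ne r g'.1 ha] at hab
      exact absurd hab (Fin.ne_of_lt (Fin.castSucc_lt_last _))
    · rw [upFun_ne r g'.1 ha, upFun_ne r g'.1 hb] at hab
      have := g'.2.1.1 (Fin.castSucc_injective _ hab)
      exact congrArg Subtype.val this
  refine ⟨(Fintype.bijective_iff_injective_and_card _).2 ⟨hinj, ?_⟩, ?_⟩
  · rw [hcard, Fintype.card_fin]
  · intro a b hab
    by_cases ha : a = r <;> by_cases hb : b = r
    · rw [ha, hb]
    · exact absurd (le_antisymm (hr (ha ▸ hab)) (ha ▸ hab)) hb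
    · rw [hb, upFun_r, upFun_ne r g'.1 ha]
      exact Fin.le_last _
    · rw [upFun_ne r g'.1 ha, upFun_ne r g'.1 hb]
      exact Fin.castSucc_le_castSucc_iff.mpr (g'.2.2 _ _ (Subtype.mk_le_mk.mpr hab))

lemma upFun_top (hcard : Fintype.card T = n + 1) (hr : IsMax r) (g' : ↥(MonoSet {u : T // u ≠ r} n)) :
    topOf (⟨upFun r g'.1, upFun_mem r hcard hr g'⟩ : ↥(MonoSet T (n+1))) = r := by
  simp only [topOf]
  rw [Equiv.symm_apply_eq]
  exact (upFun_r r g'.1).symm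

noncomputable def fiberEquiv (hcard : Fintype.card T = n + 1) (hr : IsMax r) :
    {g : ↥(MonoSet T (n+1)) // topOf g = r} ≃ ↥(MonoSet {u : T // u ≠ r} n) where
  toFun g := ⟨downFun r g, downFun_mem r hcard g⟩
  invFun g' := ⟨⟨upFun r g'.1, upFun_mem r hcard hr g'⟩, upFun_top r hcard hr g'⟩
  left_inv g := by
    refine Subtype.ext (Subtype.ext (funext fun u => ?_))
    show upFun r (downFun r g) u = g.1.1 u
    by_cases h : u = r
    · rw [h, upFun_r, gr_last r g]
    · rw [upFun_ne r _ h]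
      exact Fin.castSucc_castPred _ _
  right_inv g' := by
    refine Subtype.ext (funext fun u => ?_)
    apply Fin.val_injective
    simp only [downFun, Fin.coe_castPred]
    rw [upFun_ne r g'.1 u.2]
    simp

end Fiber
end WLP

namespace WLP2
open WLP

lemma chain_sub {T : Type} [Fintype T] [PartialOrder T]
    (hchain : ∀ v : T, IsChain (· ≤ ·) {u : T | v ≤ u}) (r : T) :
    ∀ v : {u : T // u ≠ r}, IsChain (· ≤ ·) {u : {u : T // u ≠ r} | v ≤ u} := by
  intro v a ha b hb hne
  have hab := hchain v.1 (Subtype.coe_le_coe.mpr ha) (Subtype.coe_le_coe.mpr hb)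
    (fun h => hne (Subtype.ext h))
  rcases hab with h | h
  · exact Or.inl (Subtype.coe_le_coe.mp h)
  · exact Or.inr (Subtype.coe_le_coe.mp h)

def downsetEquiv {T : Type} [Fintype T] [PartialOrder T] {r : T} (hr : IsMax r)
    (v : {u : T // u ≠ r}) :
    {u : {u : T // u ≠ r} | u ≤ v} ≃ {u : T | u ≤ v.1} where
  toFun u := ⟨u.1.1, Subtype.coe_le_coe.mpr u.2⟩
  invFun u := ⟨⟨u.1, by
    intro h
    apply v.2
    have h1 : r ≤ v.1 := h.symm.le.trans u.2
    exact le_antisymm (hr h1) h1⟩, Subtype.coe_le_coe.mp u.2⟩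
  left_inv u := rfl
  right_inv u := rfl

theorem hook : ∀ (n : ℕ) (T : Type) [Fintype T] [PartialOrder T],
    Fintype.card T = n → (∀ v : T, IsChain (· ≤ ·) {u : T | v ≤ u}) →
    Nat.card (MonoSet T n) * ∏ v : T, Nat.card {u : T | u ≤ v} = n.factorial := by
  intro n
  induction n with
  | zero =>
    intro T _ _ hcard hchain
    have hT : IsEmpty T := Fintype.card_eq_zero_iff.mp hcard
    have h1 : MonoSet T 0 = Set.univ := by
      ext g
      simp only [MonoSet, Set.mem_setOf_eq, Set.mem_univ, iff_true]
      exact ⟨⟨fun a => hT.elim a, fun x => x.elim0⟩, fun a => hT.elim a⟩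
    rw [h1, Nat.card_congr (Equiv.Set.univ _),
      Nat.card_eq_one_iff_unique.mpr
        ⟨⟨fun f g => funext fun a => hT.elim a⟩, ⟨fun a => hT.elim a⟩⟩,
      Finset.prod_of_isEmpty]
    rfl
  | succ n ih =>
    intro T _ _ hcard hchain
    have hdec : Nat.card (MonoSet T (n+1)) =
        ∑ r : T, Nat.card {g : ↥(MonoSet T (n+1)) // topOf g = r} := by
      rw [← Nat.card_congr (Equiv.sigmaFiberEquiv (fun g : ↥(MonoSet T (n+1)) => topOf g)),
        Nat.card_eq_fintype_card, Fintype.card_sigma]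
      exact Finset.sum_congr rfl fun r _ => (Nat.card_eq_fintype_card).symm
    rw [hdec, Finset.sum_mul]
    have hterm : ∀ r : T,
        Nat.card {g : ↥(MonoSet T (n+1)) // topOf g = r} * ∏ v : T, Nat.card {u : T | u ≤ v}
        = if IsMax r then Nat.card {u : T | u ≤ r} * n.factorial else 0 := by
      intro r
      by_cases hr : IsMax r
      · rw [if_pos hr]
        have hfib : Nat.card {g : ↥(MonoSet T (n+1)) // topOf g = r}
            = Nat.card (MonoSet {u : T // u ≠ r} n) :=
          Nat.card_congr (fiberEquiv r hcard hr)
        have hprod : ∏ v : T, Nat.card {u : T | u ≤ v}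
            = Nat.card {u : T | u ≤ r} *
              ∏ v : {u : T // u ≠ r}, Nat.card {u : {u : T // u ≠ r} | u ≤ v} := by
          rw [Fintype.prod_eq_mul_prod_compl r]
          congr 1
          rw [Finset.prod_subtype (p := fun u : T => u ≠ r) ({r}ᶜ : Finset T) (fun x => by simp)
            (fun u => Nat.card {w : T | w ≤ u})]
          exact Finset.prod_congr rfl fun v _ => (Nat.card_congr (downsetEquiv hr v)).symm
        rw [hfib, hprod, ← mul_assoc, mul_comm (Nat.card (MonoSet {u : T // u ≠ r} n)) _,
          mul_assoc]
        congr 1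
        exact ih {u : T // u ≠ r} (card_ne r hcard) (chain_sub hchain r)
      · rw [if_neg hr]
        have : IsEmpty {g : ↥(MonoSet T (n+1)) // topOf g = r} := by
          refine ⟨fun g => hr ?_⟩
          have := isMax_topOf g.1
          rwa [g.2] at this
        rw [Nat.card_of_isEmpty, zero_mul]
    calc ∑ r : T, Nat.card {g : ↥(MonoSet T (n+1)) // topOf g = r} *
          ∏ v : T, Nat.card {u : T | u ≤ v}
        = ∑ r : T, if IsMax r then Nat.card {u : T | u ≤ r} * n.factorial else 0 :=
          Finset.sum_congr rfl fun r _ => hterm r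
      _ = ∑ r ∈ univ.filter (fun r : T => IsMax r), Nat.card {u : T | u ≤ r} * n.factorial :=
          (Finset.sum_filter _ _).symm
      _ = (∑ r ∈ univ.filter (fun r : T => IsMax r), Nat.card {u : T | u ≤ r}) * n.factorial :=
          (Finset.sum_mul _ _ _).symm
      _ = (n+1) * n.factorial := by rw [sum_maximal_downset hchain, hcard]
      _ = (n+1).factorial := (Nat.factorial_succ n).symm

end WLP2

namespace WLP
variable {T : Type} [Fintype T] [PartialOrder T]

section Swap
variable (k : ℕ)

def ASet (T : Type) [Fintype T] [PartialOrder T] (k : ℕ) : Set (T ⊕ T → Fin (2*k)) :=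
  {f | Function.Bijective f ∧ ∀ v : T, f (inl v) < f (inr v)}

def swFun (b : T → Bool) : T ⊕ T → T ⊕ T := fun x =>
  match x with
  | inl v => if b v then inr v else inl v
  | inr v => if b v then inl v else inr v

lemma swFun_invol (b : T → Bool) (x : T ⊕ T) : swFun b (swFun b x) = x := by
  cases x with
  | inl v => by_cases h : b v <;> simp [swFun, h]
  | inr v => by_cases h : b v <;> simp [swFun, h]

def swEquiv (b : T → Bool) : T ⊕ T ≃ T ⊕ T where
  toFun := swFun b
  invFun := swFun b
  left_inv := swFun_invol b
  right_inv := swFun_invol b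

noncomputable def bits (f : T ⊕ T → Fin (2*k)) : T → Bool :=
  fun v => decide (f (inr v) < f (inl v))

lemma comp_sw_bits_mem {f : T ⊕ T → Fin (2*k)} (hf : Function.Bijective f) :
    f ∘ swFun (bits k f) ∈ ASet T k := by
  refine ⟨hf.comp (swEquiv (bits k f)).bijective, fun v => ?_⟩
  by_cases h : f (inr v) < f (inl v)
  · have hb : bits k f v = true := decide_eq_true h
    simp only [comp_apply, swFun, hb, if_true]
    exact h
  · have hb : bits k f v = false := decide_eq_false h
    simp only [comp_apply, swFun, hb, if_false]
    exact lt_of_le_of_ne (not_lt.mp h) (fun he => (inl_ne_inr (hf.1 he)))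
  
lemma bits_comp_sw {f : T ⊕ T → Fin (2*k)} (hf : f ∈ ASet T k) (b : T → Bool) :
    bits k (f ∘ swFun b) = b := by
  funext v
  by_cases h : b v
  · simp only [bits, comp_apply, swFun, h, if_true]
    exact decide_eq_true (hf.2 v)
  · simp only [bits, comp_apply, swFun, h, if_false]
    exact decide_eq_false (asymm (hf.2 v))

noncomputable def swapEquiv :
    {f : T ⊕ T → Fin (2*k) // Function.Bijective f} ≃ ↥(ASet T k) × (T → Bool) where
  toFun f := (⟨f.1 ∘ swFun (bits k f.1), comp_sw_bits_mem k f.2⟩, bits k f.1)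
  invFun p := ⟨p.1.1 ∘ swFun p.2, p.1.2.1.comp (swEquiv p.2).bijective⟩
  left_inv f := by
    refine Subtype.ext (funext fun x => ?_)
    exact congrArg f.1 (swFun_invol _ x)
  right_inv p := by
    have hb : bits k (p.1.1 ∘ swFun p.2) = p.2 := bits_comp_sw k p.1.2 p.2
    refine Prod.ext (Subtype.ext ?_) hb
    show (p.1.1 ∘ swFun p.2) ∘ swFun (bits k (p.1.1 ∘ swFun p.2)) = p.1.1
    rw [hb]
    funext x
    exact congrArg p.1.1 (swFun_invol _ x)

lemma card_bij_eq : Nat.card {f : T ⊕ T → Fin (2 * Fintype.card T) // Function.Bijective f}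
    = (2 * Fintype.card T).factorial := by
  have e1 : {f : T ⊕ T → Fin (2 * Fintype.card T) // Function.Bijective f}
      ≃ (T ⊕ T ≃ Fin (2 * Fintype.card T)) := by
    refine ⟨fun f => Equiv.ofBijective f.1 f.2, fun e => ⟨e, e.bijective⟩, ?_, ?_⟩
    · intro f; exact Subtype.ext rfl
    · intro e; exact Equiv.ext fun x => rfl
  have hc : Fintype.card (T ⊕ T) = 2 * Fintype.card T := by
    rw [Fintype.card_sum]; ring
  rw [Nat.card_congr e1, Nat.card_eq_fintype_card,
    Fintype.card_equiv (Fintype.equivFinOfCardEq hc), hc]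

lemma aset_card : Nat.card (ASet T (Fintype.card T)) * 2 ^ Fintype.card T
    = (2 * Fintype.card T).factorial := by
  rw [← card_bij_eq, Nat.card_congr (swapEquiv (Fintype.card T)), Nat.card_prod]
  congr 1
  rw [Nat.card_fun, Nat.card_eq_fintype_card (α := Bool), Nat.card_eq_fintype_card]
  simp

end Swap
end WLP

namespace Rank
open WLP
variable {T : Type} [Fintype T] [PartialOrder T]

noncomputable def rk (f : T ⊕ T → Fin (2 * Fintype.card T)) : T → Fin (Fintype.card T) :=
  fun v => ⟨#(univ.filter fun u => f (inl u) < f (inl v)), by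
    have hne : (univ.filter fun u => f (inl u) < f (inl v)) ≠ univ := by
      intro h
      have : v ∈ univ.filter fun u => f (inl u) < f (inl v) := by rw [h]; exact mem_univ v
      simp at this
    have := Finset.card_lt_card ((Finset.ssubset_univ_iff).mpr hne)
    rwa [Finset.card_univ] at this⟩

lemma rk_lt_of {f : T ⊕ T → Fin (2 * Fintype.card T)} {u v : T}
    (h : f (inl u) < f (inl v)) : rk f u < rk f v := by
  have hss : (univ.filter fun w => f (inl w) < f (inl u))
      ⊂ (univ.filter fun w => f (inl w) < f (inl v)) := by
    refine Finset.ssubset_iff_of_subset ?_ |>.mpr ?_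
    · intro w hw
      simp only [mem_filter, mem_univ, true_and] at hw ⊢
      exact hw.trans h
    · exact ⟨u, by simp [h], by simp⟩
  exact Finset.card_lt_card hss

lemma rk_eq_of {f : T ⊕ T → Fin (2 * Fintype.card T)} {u v : T}
    (h : f (inl u) = f (inl v)) : rk f u = rk f v := by
  apply Fin.val_injective
  show #(univ.filter fun w => f (inl w) < f (inl u)) = _
  rw [h]
  rfl

lemma rk_lt_iff {f : T ⊕ T → Fin (2 * Fintype.card T)} {u v : T} :
    rk f u < rk f v ↔ f (inl u) < f (inl v) := by
  constructor
  · intro h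
    rcases lt_trichotomy (f (inl u)) (f (inl v)) with h1 | h1 | h1
    · exact h1
    · exact absurd (rk_eq_of h1) (ne_of_lt h)
    · exact absurd (rk_lt_of h1) (not_lt_of_gt h)
  · exact rk_lt_of

lemma rk_le_iff {f : T ⊕ T → Fin (2 * Fintype.card T)} {u v : T} :
    rk f u ≤ rk f v ↔ f (inl u) ≤ f (inl v) := by
  rw [← not_lt, ← not_lt]
  exact not_congr rk_lt_iff

lemma rk_inj {f : T ⊕ T → Fin (2 * Fintype.card T)} (hf : Function.Injective f) :
    Function.Injective (rk f) := by
  intro u v h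
  have h1 : f (inl u) ≤ f (inl v) := rk_le_iff.mp h.le
  have h2 : f (inl v) ≤ f (inl u) := rk_le_iff.mp h.ge
  have := hf (le_antisymm h1 h2)
  exact inl_injective this

lemma rk_bij {f : T ⊕ T → Fin (2 * Fintype.card T)} (hf : Function.Injective f) :
    Function.Bijective (rk f) :=
  (Fintype.bijective_iff_injective_and_card _).2 ⟨rk_inj hf, by simp⟩

lemma rk_comp (f : T ⊕ T → Fin (2 * Fintype.card T)) (σ : T ≃ T) (v : T) :
    rk (f ∘ (Equiv.sumCongr σ σ)) v = rk f (σ v) := by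
  apply Fin.val_injective
  show #(univ.filter fun u => (f ∘ (Equiv.sumCongr σ σ)) (inl u) < (f ∘ (Equiv.sumCongr σ σ)) (inl v))
    = #(univ.filter fun u => f (inl u) < f (inl (σ v)))
  simp only [comp_apply, Equiv.sumCongr_apply, Sum.map_inl]
  refine Finset.card_bij' (fun u _ => σ u) (fun u _ => σ.symm u) ?_ ?_ ?_ ?_
  · intro a ha
    simpa using (by simpa using ha : f (inl (σ a)) < f (inl (σ v)))
  · intro a ha
    simp only [mem_filter, mem_univ, true_and] at ha ⊢
    simpa using ha
  · intro a _; simp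
  · intro a _; simp

end Rank

namespace Main
open WLP Rank
variable {T : Type} [Fintype T] [PartialOrder T]

def NSet (T : Type) [Fintype T] [PartialOrder T] : Set (T ⊕ T → Fin (2 * Fintype.card T)) :=
  {f | Function.Bijective f ∧ (∀ a b : T, a ≤ b → f (inl a) ≤ f (inl b)) ∧
       (∀ a b : T, a ≤ b → f (inl a) < f (inr b))}

noncomputable def fwdPerm (f : T ⊕ T → Fin (2 * Fintype.card T)) (hf : Function.Injective f)
    (g : T → Fin (Fintype.card T)) (hg : Function.Bijective g) : T ≃ T :=
  (Equiv.ofBijective g hg).trans (Equiv.ofBijective (rk f) (rk_bij hf)).symm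

lemma fwdPerm_key (f : T ⊕ T → Fin (2 * Fintype.card T)) (hf : Function.Injective f)
    (g : T → Fin (Fintype.card T)) (hg : Function.Bijective g) (v : T) :
    rk f (fwdPerm f hf g hg v) = g v :=
  (Equiv.ofBijective (rk f) (rk_bij hf)).apply_symm_apply (g v)

lemma sum_cancel (σ : T ≃ T) (x : T ⊕ T) :
    (Equiv.sumCongr σ σ) ((Equiv.sumCongr σ.symm σ.symm) x) = x := by
  cases x <;> simp

lemma sum_cancel' (σ : T ≃ T) (x : T ⊕ T) :
    (Equiv.sumCongr σ.symm σ.symm) ((Equiv.sumCongr σ σ) x) = x := by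
  cases x <;> simp

lemma fwd_mem (f : T ⊕ T → Fin (2 * Fintype.card T)) (hf : f ∈ ASet T (Fintype.card T))
    (g : T → Fin (Fintype.card T)) (hg : g ∈ MonoSet T (Fintype.card T)) :
    f ∘ (Equiv.sumCongr (fwdPerm f hf.1.1 g hg.1) (fwdPerm f hf.1.1 g hg.1)) ∈ NSet T := by
  set σ := fwdPerm f hf.1.1 g hg.1 with hσ
  have hmono : ∀ a b : T, a ≤ b →
      (f ∘ (Equiv.sumCongr σ σ)) (inl a) ≤ (f ∘ (Equiv.sumCongr σ σ)) (inl b) := by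
    intro a b hab
    simp only [comp_apply, Equiv.sumCongr_apply, Sum.map_inl]
    refine rk_le_iff.mp ?_
    rw [hσ, fwdPerm_key, fwdPerm_key]
    exact hg.2 a b hab
  refine ⟨hf.1.comp (Equiv.sumCongr σ σ).bijective, hmono, ?_⟩
  intro a b hab
  refine lt_of_le_of_lt (hmono a b hab) ?_
  simp only [comp_apply, Equiv.sumCongr_apply, Sum.map_inl, Sum.map_inr]
  exact hf.2 (σ b)

lemma bwd_f_mem (f' : T ⊕ T → Fin (2 * Fintype.card T)) (hf' : f' ∈ NSet T) (τ : T ≃ T) :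
    f' ∘ (Equiv.sumCongr τ.symm τ.symm) ∈ ASet T (Fintype.card T) := by
  refine ⟨hf'.1.comp (Equiv.sumCongr τ.symm τ.symm).bijective, fun v => ?_⟩
  simp only [comp_apply, Equiv.sumCongr_apply, Sum.map_inl, Sum.map_inr]
  exact hf'.2.2 _ _ le_rfl

lemma bwd_g_mem (f' : T ⊕ T → Fin (2 * Fintype.card T)) (hf' : f' ∈ NSet T) :
    rk f' ∈ MonoSet T (Fintype.card T) :=
  ⟨rk_bij hf'.1.1, fun a b hab => rk_le_iff.mpr (hf'.2.1 a b hab)⟩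

noncomputable def mainEquiv :
    ↥(ASet T (Fintype.card T)) × ↥(MonoSet T (Fintype.card T)) ≃ ↥(NSet T) × (T ≃ T) where
  toFun p := (⟨p.1.1 ∘ (Equiv.sumCongr (fwdPerm p.1.1 p.1.2.1.1 p.2.1 p.2.2.1)
      (fwdPerm p.1.1 p.1.2.1.1 p.2.1 p.2.2.1)), fwd_mem p.1.1 p.1.2 p.2.1 p.2.2⟩,
    fwdPerm p.1.1 p.1.2.1.1 p.2.1 p.2.2.1)
  invFun q := (⟨q.1.1 ∘ (Equiv.sumCongr q.2.symm q.2.symm), bwd_f_mem q.1.1 q.1.2 q.2⟩,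
    ⟨rk q.1.1, bwd_g_mem q.1.1 q.1.2⟩)
  left_inv p := by
    set σ := fwdPerm p.1.1 p.1.2.1.1 p.2.1 p.2.2.1 with hσ
    refine Prod.ext (Subtype.ext ?_) (Subtype.ext ?_)
    · show (p.1.1 ∘ (Equiv.sumCongr σ σ)) ∘ (Equiv.sumCongr σ.symm σ.symm) = p.1.1
      funext x
      exact congrArg p.1.1 (sum_cancel σ x)
    · show rk (p.1.1 ∘ (Equiv.sumCongr σ σ)) = p.2.1
      funext v
      rw [rk_comp, hσ, fwdPerm_key]
  right_inv q := by
    have hστ : ∀ (h1 : Function.Injective (q.1.1 ∘ (Equiv.sumCongr q.2.symm q.2.symm)))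
        (h2 : Function.Bijective (rk q.1.1)),
        fwdPerm (q.1.1 ∘ (Equiv.sumCongr q.2.symm q.2.symm)) h1 (rk q.1.1) h2 = q.2 := by
      intro h1 h2
      refine Equiv.ext fun v => ?_
      apply rk_inj h1
      rw [fwdPerm_key, rk_comp]
      simp
    refine Prod.ext (Subtype.ext ?_) ?_
    · dsimp only
      rw [hστ]
      funext x
      exact congrArg q.1.1 (sum_cancel' q.2 x)
    · dsimp only
      rw [hστ]

lemma main_count : Nat.card (ASet T (Fintype.card T)) * Nat.card (MonoSet T (Fintype.card T))
    = Nat.card (NSet T) * (Fintype.card T).factorial := by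
  have h1 := Nat.card_congr (mainEquiv (T := T))
  rw [Nat.card_prod, Nat.card_prod] at h1
  rw [h1]
  congr 1
  rw [Nat.card_eq_fintype_card]
  exact Fintype.card_equiv (Equiv.refl T)

end Main


open WLP WLP2 Rank Main in
/-- Enumerating states satisfying a given win-loss sequence with WL-putback. Let `T`
be a tree poset on `k` vertices (principal up-sets are chains, with a maximum root),
with subtree sizes `h v = #{u | u ≤ v}`. Form the poset on `2k` elements by adding,
for each tree vertex `v`, one extra element `y_v` with the only added relation
`v < y_v` (so in the generated order `u < y_v` exactly when `u ≤ v`). Then the number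
of linear extensions of this poset (bijections to `{1,…,2k}` preserving the order)
times `2^k · ∏ v, h v` equals `(2k)!`. -/
theorem wl_putback_state_count (k : ℕ) (T : Type) [Fintype T] [PartialOrder T]
    (hcard : Fintype.card T = k)
    (hchain : ∀ v : T, IsChain (· ≤ ·) {u : T | v ≤ u})
    (hroot : ∃ m : T, ∀ v, v ≤ m) :
    Set.ncard {f : T ⊕ T → Fin (2 * k) | Function.Bijective f ∧
        (∀ a b : T, a ≤ b → f (Sum.inl a) ≤ f (Sum.inl b)) ∧
        (∀ a b : T, a ≤ b → f (Sum.inl a) < f (Sum.inr b))} *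
      (2 ^ k * ∏ v : T, Set.ncard {u : T | u ≤ v}) = (2 * k).factorial := by
  subst hcard
  simp only [← Nat.card_coe_set_eq]
  show Nat.card (NSet T) * (2 ^ Fintype.card T * ∏ v : T, Nat.card {u : T | u ≤ v})
    = (2 * Fintype.card T).factorial
  have h1 : Nat.card (ASet T (Fintype.card T)) * 2 ^ Fintype.card T
      = (2 * Fintype.card T).factorial := aset_card
  have h2 : Nat.card (ASet T (Fintype.card T)) * Nat.card (MonoSet T (Fintype.card T))
      = Nat.card (NSet T) * (Fintype.card T).factorial := main_count
  have h3 : Nat.card (MonoSet T (Fintype.card T)) * ∏ v : T, Nat.card {u : T | u ≤ v}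
      = (Fintype.card T).factorial := hook (Fintype.card T) T rfl hchain
  have hL : 0 < Nat.card (MonoSet T (Fintype.card T)) := by
    rcases Nat.eq_zero_or_pos (Nat.card (MonoSet T (Fintype.card T))) with h | h
    · exfalso
      rw [h, zero_mul] at h3
      exact (Nat.factorial_pos _).ne' h3.symm
    · exact h
  apply Nat.eq_of_mul_eq_mul_right hL
  calc Nat.card (NSet T) * (2 ^ Fintype.card T * ∏ v : T, Nat.card {u : T | u ≤ v}) *
        Nat.card (MonoSet T (Fintype.card T))
      = Nat.card (NSet T) * (Fintype.card T).factorial * 2 ^ Fintype.card T := by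
        rw [← h3]; ring
    _ = Nat.card (ASet T (Fintype.card T)) * Nat.card (MonoSet T (Fintype.card T)) *
        2 ^ Fintype.card T := by rw [← h2]
    _ = Nat.card (ASet T (Fintype.card T)) * 2 ^ Fintype.card T *
        Nat.card (MonoSet T (Fintype.card T)) := by ring
    _ = (2 * Fintype.card T).factorial * Nat.card (MonoSet T (Fintype.card T)) := by rw [h1]
end

section
/- The number of lattice paths from (0,0) to (m+k, k) using unit right (R) and up (U) steps that never go above the line x - y = 1 except possibly before the first R step equals the sum over all (x_1,...,x_m) of nonnegative integers with x_1 + ⋯ + x_m = k of ∏_{i=1}^m Catalan(x_i), via the bijection that splits a path at the last visits to the lines x - y = i for i = 1, ..., m-1. -/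
/-!
Encode a right step R as `true` and an up step U as `false`. A path of the theorem must start
with R, and what follows is a ballot sequence (no prefix has more U's than R's) ending at height
`m - 1`. Cutting a ballot sequence of height `h + 1` at its last visit to height `0` writes it
uniquely as `d ++ true :: r` with `d` a Dyck path and `r` a ballot sequence of height `h`.
Iterating splits the path into `m` Dyck paths, each counted by a Catalan number.
-/

open List Finset

theorem Finset.Nat.sum_antidiagonalTuple_succ {M : Type*} [AddCommMonoid M] (n k : ℕ)
    (f : (Fin (n + 1) → ℕ) → M) :
    ∑ x ∈ Finset.Nat.antidiagonalTuple (n + 1) k, f x =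
      ∑ p ∈ antidiagonal k, ∑ y ∈ Finset.Nat.antidiagonalTuple n p.2, f (Fin.cons p.1 y) := by
  -- `antidiagonalTuple (n + 1)` is defined on lists by exactly this recursion.
  have hval : (antidiagonal k).val = (List.Nat.antidiagonal k : Multiset (ℕ × ℕ)) := rfl
  simp only [Finset.sum, Finset.Nat.antidiagonalTuple, Multiset.Nat.antidiagonalTuple, hval,
    List.Nat.antidiagonalTuple, Multiset.map_coe, Multiset.sum_coe, List.flatMap_def,
    List.map_flatten, List.sum_flatten, List.map_map, Function.comp_def]

theorem Finset.Nat.sum_antidiagonalTuple_succ_prod {R : Type*} [CommSemiring R] (n k : ℕ)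
    (f : ℕ → R) :
    ∑ x ∈ Finset.Nat.antidiagonalTuple (n + 1) k, ∏ i, f (x i) =
      ∑ p ∈ antidiagonal k, f p.1 * ∑ y ∈ Finset.Nat.antidiagonalTuple n p.2, ∏ i, f (y i) := by
  simp only [Finset.Nat.sum_antidiagonalTuple_succ, Fin.prod_univ_succ, Fin.cons_zero,
    Fin.cons_succ, Finset.mul_sum]

namespace LatticePath

def IsBallot (l : List Bool) : Prop :=
  ∀ i, (l.take i).count false ≤ (l.take i).count true

namespace IsBallot

variable {l l₁ l₂ : List Bool}

theorem count_le (hl : IsBallot l) : l.count false ≤ l.count true := by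
  simpa using hl l.length

theorem append (h₁ : IsBallot l₁) (h₂ : IsBallot l₂) : IsBallot (l₁ ++ l₂) := fun i => by
  simp only [take_append, count_append]
  exact Nat.add_le_add (h₁ i) (h₂ _)

theorem of_append (hl : IsBallot (l₁ ++ l₂)) : IsBallot l₁ := fun i => by
  have := hl (min i l₁.length)
  rwa [← take_take, take_left] at this

theorem append_false (hl : IsBallot l) (hlt : l.count false < l.count true) :
    IsBallot (l ++ [false]) := fun i => by
  rcases le_or_gt i l.length with hi | hi
  · simpa [take_append_of_le_length hi] using hl i
  · have : take (i - l.length) [false] = [false] := take_of_length_le (by simp; omega)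
    simp only [take_append, take_of_length_le hi.le, this, count_append]
    grind

end IsBallot

theorem isBallot_nil : IsBallot [] := fun i => by simp

theorem isBallot_singleton_true : IsBallot [true] := by
  rintro (_ | _ | i) <;> simp

section Factorization

variable {d₁ d₂ r₁ r₂ s : List Bool}

theorem eq_nil_of_append_cons_true_eq (hd₁ : d₁.count false = d₁.count true)
    (hd₂ : d₂.count false = d₂.count true) (hr₁ : IsBallot r₁) (h₂ : d₂ = d₁ ++ s)
    (h₁ : true :: r₁ = s ++ true :: r₂) : s = [] := by
  obtain _ | ⟨b, s⟩ := s
  · rfl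
  -- Otherwise `s = true :: s'` with `s'` a prefix of the ballot sequence `r₁`, yet `d₂ = d₁ ++ s`
  -- forces `s` to be balanced, so `s'` would have one more `false` than `true`.
  obtain ⟨rfl, rfl⟩ := List.cons.inj h₁
  have := hr₁.of_append.count_le
  subst h₂
  grind

theorem eq_of_append_cons_true_eq (hd₁ : d₁.count false = d₁.count true)
    (hd₂ : d₂.count false = d₂.count true) (hr₁ : IsBallot r₁) (hr₂ : IsBallot r₂)
    (h : d₁ ++ true :: r₁ = d₂ ++ true :: r₂) : d₁ = d₂ ∧ r₁ = r₂ := by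
  rcases append_eq_append_iff.mp h with ⟨s, h₂, h₁⟩ | ⟨s, h₁, h₂⟩
  · obtain rfl := eq_nil_of_append_cons_true_eq hd₁ hd₂ hr₁ h₂ h₁
    simp_all
  · obtain rfl := eq_nil_of_append_cons_true_eq hd₂ hd₁ hr₂ h₁ h₂
    simp_all

theorem IsBallot.exists_eq_append_cons_true {l : List Bool} (hl : IsBallot l)
    (hlt : l.count false < l.count true) :
    ∃ d r, l = d ++ true :: r ∧ IsBallot d ∧ d.count false = d.count true ∧ IsBallot r := by
  induction l using List.reverseRecOn with
  | nil => simp at hlt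
  | append_singleton l b ih =>
    have hl' := hl.of_append
    have hle := hl'.count_le
    cases b
    · obtain ⟨d, r, rfl, hd, hbal, hr⟩ := ih hl' (by grind)
      exact ⟨d, r ++ [false], by simp, hd, hbal, hr.append_false (by grind)⟩
    · rcases hle.eq_or_lt with hbal | hlt'
      · exact ⟨l, [], rfl, hl', hbal, isBallot_nil⟩
      · obtain ⟨d, r, rfl, hd, hbal, hr⟩ := ih hl' hlt'
        exact ⟨d, r ++ [true], by simp, hd, hbal, hr.append isBallot_singleton_true⟩

end Factorization

def ballots (h k : ℕ) : Set (List Bool) :=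
  {l | IsBallot l ∧ l.count true = h + k ∧ l.count false = k}

theorem finite_ballots (h k : ℕ) : (ballots h k).Finite :=
  (List.finite_length_eq Bool (h + 2 * k)).subset fun l ⟨_, ht, hf⟩ => by
    rw [Set.mem_ofPred_eq, ← count_true_add_count_false, ht, hf]
    omega

instance (h k : ℕ) : Finite (ballots h k) := (finite_ballots h k).to_subtype

def dyckStepEquivBool : DyckStep ≃ Bool where
  toFun | .U => true | .D => false
  invFun | true => .U | false => .D
  left_inv s := by cases s <;> rfl
  right_inv b := by cases b <;> rfl

@[simp]
theorem count_true_map_dyckStepEquivBool (l : List DyckStep) :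
    (l.map dyckStepEquivBool).count true = l.count .U :=
  count_map_of_injective _ _ dyckStepEquivBool.injective .U

@[simp]
theorem count_false_map_dyckStepEquivBool (l : List DyckStep) :
    (l.map dyckStepEquivBool).count false = l.count .D :=
  count_map_of_injective _ _ dyckStepEquivBool.injective .D

@[simp]
theorem count_U_map_dyckStepEquivBool_symm (l : List Bool) :
    (l.map dyckStepEquivBool.symm).count .U = l.count true :=
  count_map_of_injective _ _ dyckStepEquivBool.symm.injective true

@[simp]
theorem count_D_map_dyckStepEquivBool_symm (l : List Bool) :
    (l.map dyckStepEquivBool.symm).count .D = l.count false :=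
  count_map_of_injective _ _ dyckStepEquivBool.symm.injective false

def ballotsZeroEquiv (a : ℕ) : ballots 0 a ≃ {d : DyckWord // d.semilength = a} where
  toFun l :=
    ⟨{ toList := l.1.map dyckStepEquivBool.symm
       count_U_eq_count_D := by simp [l.2.2.1, l.2.2.2]
       count_D_le_count_U i := by simpa [← map_take] using l.2.1 i }, by
      simpa [DyckWord.semilength] using l.2.2.1⟩
  invFun d := ⟨d.1.toList.map dyckStepEquivBool, fun i => by
      simpa [← map_take] using d.1.count_D_le_count_U i, by
      simpa [DyckWord.semilength] using d.2, by
      simpa [← DyckWord.semilength_eq_count_D] using d.2⟩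
  left_inv l := Subtype.ext (by simp [List.map_map])
  right_inv d := Subtype.ext (DyckWord.ext (by simp [List.map_map]))

theorem card_ballots_zero (a : ℕ) : Nat.card (ballots 0 a) = catalan a := by
  rw [Nat.card_congr (ballotsZeroEquiv a), Nat.card_eq_fintype_card,
    DyckWord.card_dyckWord_semilength_eq_catalan]

theorem count_false_eq_count_true_of_mem_ballots_zero {d : List Bool} {a : ℕ}
    (hd : d ∈ ballots 0 a) : d.count false = d.count true := by
  rw [hd.2.1, hd.2.2, zero_add]

theorem append_cons_true_mem_ballots {d r : List Bool} {a b h k : ℕ} (hd : d ∈ ballots 0 a)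
    (hr : r ∈ ballots h b) (hk : a + b = k) : d ++ true :: r ∈ ballots (h + 1) k := by
  obtain ⟨hd, hdt, hdf⟩ := hd
  obtain ⟨hr, hrt, hrf⟩ := hr
  exact ⟨hd.append (isBallot_singleton_true.append hr), by grind, by grind⟩

theorem card_ballots_succ (h k : ℕ) :
    Nat.card (ballots (h + 1) k) =
      ∑ p ∈ antidiagonal k, catalan p.1 * Nat.card (ballots h p.2) := by
  let glue (x : Σ p : antidiagonal k, ballots 0 p.1.1 × ballots h p.1.2) : ballots (h + 1) k :=
    ⟨x.2.1 ++ true :: x.2.2,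
      append_cons_true_mem_ballots x.2.1.2 x.2.2.2 (mem_antidiagonal.mp x.1.2)⟩
  have hglue : glue.Bijective := by
    constructor
    · rintro ⟨⟨p, hp⟩, ⟨d₁, hd₁⟩, ⟨r₁, hr₁⟩⟩ ⟨⟨q, hq⟩, ⟨d₂, hd₂⟩, ⟨r₂, hr₂⟩⟩ heq
      obtain ⟨rfl, rfl⟩ := eq_of_append_cons_true_eq
        (count_false_eq_count_true_of_mem_ballots_zero hd₁)
        (count_false_eq_count_true_of_mem_ballots_zero hd₂) hr₁.1 hr₂.1 (congrArg Subtype.val heq)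
      obtain rfl : p = q := Prod.ext (by simpa using hd₁.2.1.symm.trans hd₂.2.1)
        (hr₁.2.2.symm.trans hr₂.2.2)
      rfl
    · rintro ⟨l, hl, hlt, hlf⟩
      obtain ⟨d, r, rfl, hd, hbal, hr⟩ := hl.exists_eq_append_cons_true (by omega)
      have hd' : d ∈ ballots 0 (d.count true) := ⟨hd, (zero_add _).symm, hbal⟩
      have hr' : r ∈ ballots h (r.count false) := ⟨hr, by grind, rfl⟩
      exact ⟨⟨⟨(d.count true, r.count false), mem_antidiagonal.mpr (by grind)⟩,
        ⟨d, hd'⟩, ⟨r, hr'⟩⟩, rfl⟩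
  rw [← Nat.card_eq_of_bijective glue hglue, Nat.card_sigma]
  simp only [Nat.card_prod, card_ballots_zero]
  exact Finset.sum_coe_sort _ fun p : ℕ × ℕ => catalan p.1 * Nat.card (ballots h p.2)

theorem card_ballots (h k : ℕ) :
    Nat.card (ballots h k) = ∑ x ∈ Finset.Nat.antidiagonalTuple (h + 1) k, ∏ i, catalan (x i) := by
  induction h generalizing k with
  | zero => rw [card_ballots_zero]; simp
  | succ h ih => simp only [card_ballots_succ, ih, Finset.Nat.sum_antidiagonalTuple_succ_prod]

def IsStrictBallot (l : List Bool) : Prop :=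
  ∀ i, 0 < (l.take i).count true → (l.take i).count false < (l.take i).count true

theorem IsStrictBallot.of_cons_false {l : List Bool} (hl : IsStrictBallot (false :: l)) :
    IsStrictBallot l := fun i hi => by
  have := hl (i + 1) (by simpa using hi)
  grind

theorem IsStrictBallot.count_true_eq_zero_of_cons_false {l : List Bool}
    (hl : IsStrictBallot (false :: l)) : l.count true = 0 := by
  induction l with
  | nil => rfl
  | cons b l ih =>
    cases b
    · simpa using ih hl.of_cons_false
    · simpa using hl 2

theorem isStrictBallot_cons_true_iff {l : List Bool} : IsStrictBallot (true :: l) ↔ IsBallot l := by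
  constructor
  · intro hl i
    simpa [Nat.lt_succ_iff] using hl (i + 1) (by simp)
  · rintro hl (_ | i) hi
    · simp at hi
    · simpa [Nat.lt_succ_iff] using hl i

def latticePaths (m k : ℕ) : Set (List Bool) :=
  {l | l.count true = m + k ∧ l.count false = k ∧ IsStrictBallot l}

theorem latticePaths_succ (m k : ℕ) : latticePaths (m + 1) k = cons true '' ballots m k := by
  ext l
  constructor
  · rintro ⟨hlt, hlf, hl⟩
    obtain _ | ⟨_ | _, r⟩ := l
    · grind
    · grind [hl.count_true_eq_zero_of_cons_false]
    · exact ⟨r, ⟨isStrictBallot_cons_true_iff.mp hl, by grind, by grind⟩, rfl⟩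
  · rintro ⟨r, ⟨hr, hrt, hrf⟩, rfl⟩
    exact ⟨by grind, by grind, isStrictBallot_cons_true_iff.mpr hr⟩

end LatticePath

/-- Lattice paths from `(0,0)` to `(m+k, k)` with right steps (`true`) and up steps
(`false`) that never go above the line `x - y = 1` except before the first right step
(i.e. every prefix containing a right step has strictly more rights than ups) are
counted by the sum, over all `m`-tuples of nonnegative integers summing to `k`, of the
products of the corresponding Catalan numbers. -/
theorem lattice_paths_eq_sum_prod_catalan (m k : ℕ) (hm : 1 ≤ m) :
    Set.ncard {l : List Bool | l.count true = m + k ∧ l.count false = k ∧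
        ∀ i, 0 < (l.take i).count true →
          (l.take i).count false < (l.take i).count true} =
      ∑ x ∈ Finset.Nat.antidiagonalTuple m k, ∏ i, catalan (x i) := by
  obtain ⟨m, rfl⟩ := Nat.exists_eq_add_of_le' hm
  change (LatticePath.latticePaths (m + 1) k).ncard = _
  rw [LatticePath.latticePaths_succ, Set.ncard_image_of_injective _ cons_injective,
    ← Nat.card_coe_set_eq, LatticePath.card_ballots]
end
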